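/- arXiv:math/0411107 — 4 statements merged into one kernel-verified Lean document; each statement's English description precedes it below -/
import Mathlib

section
/- Let n ≥ 1, let a_1, …, a_{n+1} ∈ ℝ^n be affinely independent, and let c_1, …, c_{n+1} be nonzero real numbers. Define f : ℝ^n_+ → ℝ by f(x) = Σ_{j=1}^{n+1} c_j x^{a_j}, where x^{a_j} := x_1^{a_{1,j}} ⋯ x_n^{a_{n,j}} (real powers). Then f has a zero in ℝ^n_+ if and only if the coefficients c_1, …, c_{n+1} do not all have the same sign. -/
open Finset

/-! On the orthant every monomial is positive, so coefficients of one sign keep f away from 0.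
Conversely, with x = exp y, affine independence makes the (n+1) × (n+1) linear system
t + ⟨a_j, y⟩ = log w_j solvable for every w, so the monomials x^{a_j} can be made proportional
to any positive vector w. It remains to find a positive w with ∑ c_j w_j = 0; when the c_j have
mixed signs, the all-ones vector corrected in one suitable coordinate does. -/

section MixedSigns

variable {ι K : Type*} [Fintype ι] [Field K] [LinearOrder K] [IsStrictOrderedRing K]

theorem Finset.sum_mul_ne_zero_of_forall_pos_or_forall_neg [Nonempty ι] {c m : ι → K}
    (hm : ∀ j, 0 < m j) (hc : (∀ j, 0 < c j) ∨ (∀ j, c j < 0)) :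
    ∑ j, c j * m j ≠ 0 := by
  rcases hc with hc | hc
  · exact (sum_pos (fun j _ => mul_pos (hc j) (hm j)) univ_nonempty).ne'
  · exact (sum_neg (fun j _ => mul_neg_of_neg_of_pos (hc j) (hm j)) univ_nonempty).ne

theorem exists_pos_sum_mul_eq_zero_of_sum_div_nonpos [DecidableEq ι] {c : ι → K} {r : ι}
    (hr : c r ≠ 0) (hS : (∑ j, c j) / c r ≤ 0) :
    ∃ w : ι → K, (∀ j, 0 < w j) ∧ ∑ j, c j * w j = 0 := by
  refine ⟨fun j => 1 + if j = r then -(∑ j, c j) / c r else 0, fun j => ?_, ?_⟩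
  · dsimp only
    split_ifs
    · rw [neg_div]
      linarith
    · norm_num
  · simp only [mul_add, mul_one, mul_ite, mul_zero, sum_add_distrib, sum_ite_eq', mem_univ,
      if_true]
    field_simp
    ring

theorem exists_pos_sum_mul_eq_zero {c : ι → K} {p q : ι} (hp : c p < 0) (hq : 0 < c q) :
    ∃ w : ι → K, (∀ j, 0 < w j) ∧ ∑ j, c j * w j = 0 := by
  classical
  rcases le_or_gt (∑ j, c j) 0 with hS | hS
  · exact exists_pos_sum_mul_eq_zero_of_sum_div_nonpos hq.ne'
      (div_nonpos_of_nonpos_of_nonneg hS hq.le)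
  · exact exists_pos_sum_mul_eq_zero_of_sum_div_nonpos hp.ne
      (div_nonpos_of_nonneg_of_nonpos hS.le hp.le)

end MixedSigns

theorem AffineIndependent.exists_add_dotProduct_eq {K : Type*} [Field K] {n : ℕ}
    {a : Fin (n + 1) → Fin n → K} (ha : AffineIndependent K a) (v : Fin (n + 1) → K) :
    ∃ (t : K) (y : Fin n → K), ∀ j, t + a j ⬝ᵥ y = v j := by
  let M : Matrix (Fin (n + 1)) (Fin (n + 1)) K := Matrix.of fun j => Matrix.vecCons 1 (a j)
  have hM : LinearIndependent K M := by
    refine Fintype.linearIndependent_iff.2 fun g hg => ?_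
    have hsum : ∑ j, g j = 0 := by simpa [M] using congrFun hg 0
    have hsmul : ∑ j, g j • a j = 0 := by
      funext i
      simpa [M] using congrFun hg i.succ
    exact fun j => ha.eq_zero_of_sum_eq_zero hsum hsmul j (mem_univ j)
  obtain ⟨z, hz⟩ := Matrix.mulVec_surjective_iff_isUnit.2
    (Matrix.linearIndependent_rows_iff_isUnit.1 hM) v
  refine ⟨z 0, Fin.tail z, fun j => ?_⟩
  rw [← hz]
  simp [Matrix.mulVec, dotProduct, Fin.sum_univ_succ, Fin.tail]

theorem Real.prod_exp_rpow {ι : Type*} (s : Finset ι) (y a : ι → ℝ) :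
    ∏ i ∈ s, exp (y i) ^ a i = exp (∑ i ∈ s, a i * y i) := by
  rw [exp_sum]
  exact prod_congr rfl fun i _ => by rw [← exp_mul, mul_comm]

theorem AffineIndependent.exists_pos_prod_rpow_eq_mul {n : ℕ} {a : Fin (n + 1) → Fin n → ℝ}
    (ha : AffineIndependent ℝ a) {w : Fin (n + 1) → ℝ} (hw : ∀ j, 0 < w j) :
    ∃ x : Fin n → ℝ, (∀ i, 0 < x i) ∧
      ∃ s : ℝ, ∀ j, ∏ i, x i ^ a j i = s * w j := by
  obtain ⟨t, y, hty⟩ := ha.exists_add_dotProduct_eq fun j => Real.log (w j)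
  refine ⟨fun i => Real.exp (y i), fun i => Real.exp_pos _, Real.exp (-t), fun j => ?_⟩
  rw [Real.prod_exp_rpow, ← dotProduct, eq_sub_of_add_eq' (hty j), Real.exp_sub,
    Real.exp_log (hw j), Real.exp_neg]
  ring

theorem feas_pos_orthant_simplex_case_general
    (n : ℕ)
    (a : Fin (n + 1) → Fin n → ℝ)
    (ha : ∀ γ : Fin (n + 1) → ℝ,
      ∑ j, γ j • a j = 0 → ∑ j, γ j = 0 → γ = 0)
    (c : Fin (n + 1) → ℝ) (hc : ∀ j, c j ≠ 0) :
    (∃ x : Fin n → ℝ, (∀ i, 0 < x i) ∧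
        ∑ j, c j * ∏ i, (x i) ^ (a j i) = 0)
      ↔ ¬ ((∀ j, 0 < c j) ∨ (∀ j, c j < 0)) := by
  have haff : AffineIndependent ℝ a :=
    (affineIndependent_iff_of_fintype (k := ℝ) (p := a)).2 fun γ hγ hv => by
      rw [weightedVSub_eq_linear_combination _ hγ] at hv
      exact congrFun (ha γ hv hγ)
  constructor
  · rintro ⟨x, hx, hroot⟩ hsign
    exact sum_mul_ne_zero_of_forall_pos_or_forall_neg
      (fun j => prod_pos fun i _ => Real.rpow_pos_of_pos (hx i) _) hsign hroot
  · intro hsign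
    simp only [not_or, not_forall, not_lt] at hsign
    obtain ⟨⟨p, hp⟩, q, hq⟩ := hsign
    obtain ⟨w, hw, hcw⟩ := exists_pos_sum_mul_eq_zero (hp.lt_of_ne (hc p)) (hq.lt_of_ne' (hc q))
    obtain ⟨x, hx, s, hxw⟩ := haff.exists_pos_prod_rpow_eq_mul hw
    refine ⟨x, hx, ?_⟩
    simp_rw [hxw, mul_left_comm _ s, ← mul_sum, hcw, mul_zero]

/-- An n-variate (n+1)-nomial with real exponents and affinely
independent support has a root in the open positive orthant iff its
coefficients do not all have the same sign. -/
theorem feas_pos_orthant_simplex_case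
    (n : ℕ) (hn : 1 ≤ n)
    (a : Fin (n + 1) → Fin n → ℝ)
    (ha : ∀ γ : Fin (n + 1) → ℝ,
      ∑ j, γ j • a j = 0 → ∑ j, γ j = 0 → γ = 0)
    (c : Fin (n + 1) → ℝ) (hc : ∀ j, c j ≠ 0) :
    (∃ x : Fin n → ℝ, (∀ i, 0 < x i) ∧
        ∑ j, c j * ∏ i, (x i) ^ (a j i) = 0)
      ↔ ¬ ((∀ j, 0 < c j) ∨ (∀ j, c j < 0)) :=
  feas_pos_orthant_simplex_case_general n a ha c hc
end

section
/- Let n ≥ 1, let a_1, …, a_{n+1} ∈ ℤ^n be affinely independent with a_j = (a_{1,j},…,a_{n,j}), and let c_1, …, c_{n+1} be nonzero real numbers all of the same sign. Define f : (ℝ∖{0})^n → ℝ by f(x) = Σ_{j=1}^{n+1} c_j x^{a_j}, where x^{a_j} := x_1^{a_{1,j}} ⋯ x_n^{a_{n,j}}. Then f has a zero in (ℝ∖{0})^n if and only if there exist indices i ∈ {1,…,n} and j, j' ∈ {1,…,n+1} such that a_{i,j} − a_{i,j'} is odd, and this holds if and only if there exist indices i ∈ {1,…,n} and j ∈ {1,…,n+1}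 such that a_{i,j} − a_{i,1} is odd. -/
/-!
If all exponent differences are even, the monomials `x ^ a j` all have the same sign on
`(ℝ∖{0})ⁿ`, so a combination with same-sign coefficients cannot vanish. If `a j i₀ - a j' i₀` is
odd, negating `x i₀` gives the `j`-th and `j'`-th terms opposite signs. Writing `|x| = exp u`,
affine independence of the exponents lets us prescribe every `a k ⬝ᵥ u` up to a common additive
constant, i.e. the moduli of all terms up to a common factor; a positive vector balancing the
signed coefficients then yields a root.
-/

open Finset

lemma exists_odd_sub_iff_exists_odd_sub_left {ι : Type*} (f : ι → ℤ) (j₀ : ι) :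
    (∃ j j', Odd (f j - f j')) ↔ ∃ j, Odd (f j - f j₀) := by
  refine ⟨fun ⟨j, j', hodd⟩ => ?_, fun ⟨j, hodd⟩ => ⟨j, j₀, hodd⟩⟩
  by_contra! heven
  simp only [Int.not_odd_iff_even] at heven
  have : f j - f j' = (f j - f j₀) - (f j' - f j₀) := by ring
  exact Int.not_odd_iff_even.mpr (this ▸ (heven j).sub (heven j')) hodd

lemma sum_mul_ne_zero_of_same_sign {ι : Type*} [Fintype ι] [Nonempty ι] {c w : ι → ℝ}
    (hc : (∀ j, 0 < c j) ∨ ∀ j, c j < 0) (hw : ∀ j, 0 < w j) : ∑ j, c j * w j ≠ 0 := by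
  rcases hc with hc | hc
  · exact (sum_pos (fun j _ => mul_pos (hc j) (hw j)) univ_nonempty).ne'
  · exact (sum_neg (fun j _ => mul_neg_of_neg_of_pos (hc j) (hw j)) univ_nonempty).ne

lemma exists_pos_sum_mul_eq_zero_s1 {ι : Type*} [Fintype ι] [DecidableEq ι] {d : ι → ℝ} {j j' : ι}
    (h : d j * d j' < 0) : ∃ y : ι → ℝ, (∀ k, 0 < y k) ∧ ∑ k, d k * y k = 0 := by
  wlog hj : 0 < d j generalizing j j'
  · exact this (j := j') (j' := j) (by linarith) (by nlinarith)
  have hj' : d j' < 0 := by nlinarith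
  set t := ∑ k, d k
  -- Start from the all-ones vector and cancel the excess `t` on a coordinate of the right sign.
  refine ⟨fun k => 1 + (if k = j' then max t 0 / -d j' else 0)
    + (if k = j then max (-t) 0 / d j else 0), fun k => ?_, ?_⟩
  · have : 0 ≤ max t 0 / -d j' := div_nonneg (le_max_right _ _) (by linarith)
    have : 0 ≤ max (-t) 0 / d j := div_nonneg (le_max_right _ _) hj.le
    dsimp only
    split_ifs <;> linarith
  · simp only [mul_add, mul_one, mul_ite, mul_zero, sum_add_distrib, sum_ite_eq', mem_univ, if_true]
    rw [mul_div_cancel₀ _ hj.ne', mul_div_assoc', div_neg, mul_div_cancel_left₀ _ hj'.ne]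
    rcases le_total t 0 with ht | ht <;> simp [ht, t]

lemma exists_add_dotProduct_eq {n : ℕ} (p : Fin (n + 1) → Fin n → ℝ)
    (hp : ∀ γ : Fin (n + 1) → ℝ, ∑ j, γ j • p j = 0 → ∑ j, γ j = 0 → γ = 0)
    (w : Fin (n + 1) → ℝ) : ∃ (s : ℝ) (u : Fin n → ℝ), ∀ j, s + p j ⬝ᵥ u = w j := by
  set B : Matrix (Fin (n + 1)) (Fin (n + 1)) ℝ := Matrix.of fun j => Matrix.vecCons 1 (p j)
  have hinj : Function.Injective B.vecMul := by
    rw [← Matrix.coe_vecMulLinear, ← LinearMap.ker_eq_bot, LinearMap.ker_eq_bot']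
    intro γ hγ
    refine hp γ ?_ (by simpa [Matrix.vecMul, dotProduct, B] using congrFun hγ 0)
    funext i
    simpa [Matrix.vecMul, dotProduct, B] using congrFun hγ i.succ
  obtain ⟨v, hv⟩ := Matrix.mulVec_surjective_iff_isUnit.mpr
    (Matrix.vecMul_injective_iff_isUnit.mp hinj) w
  refine ⟨Matrix.vecHead v, Matrix.vecTail v, fun j => ?_⟩
  simpa [Matrix.mulVec, Matrix.cons_dotProduct, B] using congrFun hv j

lemma Real.exp_zpow (t : ℝ) (m : ℤ) : Real.exp t ^ m = Real.exp (m * t) := by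
  rw [← Real.rpow_intCast, Real.rpow_def_of_pos (Real.exp_pos t), Real.log_exp, mul_comm]

lemma prod_signed_exp_zpow {n : ℕ} (i₀ : Fin n) (u : Fin n → ℝ) (m : Fin n → ℤ) :
    ∏ i, ((if i = i₀ then -1 else 1) * Real.exp (u i)) ^ m i
      = (-1) ^ m i₀ * Real.exp (∑ i, (m i : ℝ) * u i) := by
  simp_rw [mul_zpow, Real.exp_zpow, prod_mul_distrib, Real.exp_sum]
  congr 1
  rw [prod_eq_single i₀ (fun i _ hi => by simp [hi]) (by simp)]
  simp

lemma exists_odd_sub_of_sum_mul_prod_zpow_eq_zero {ι κ : Type*} [Fintype ι] [Nonempty ι]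
    [Fintype κ] (a : ι → κ → ℤ) {c : ι → ℝ} (hc : (∀ j, 0 < c j) ∨ ∀ j, c j < 0)
    {x : κ → ℝ} (hx : ∀ i, x i ≠ 0) (hf : ∑ j, c j * ∏ i, x i ^ a j i = 0) :
    ∃ i j j', Odd (a j i - a j' i) := by
  by_contra! heven
  obtain ⟨j₀⟩ := ‹Nonempty ι›
  have hpos : ∀ j, 0 < (∏ i, x i ^ a j i) * ∏ i, x i ^ a j₀ i := fun j => by
    rw [← prod_mul_distrib]
    refine prod_pos fun i _ => ?_
    rw [← zpow_add₀ (hx i), show a j i + a j₀ i = (a j i - a j₀ i) + 2 * a j₀ i by ring]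
    exact ((Int.not_odd_iff_even.mp (heven i j j₀)).add (even_two_mul _)).zpow_pos (hx i)
  refine sum_mul_ne_zero_of_same_sign hc hpos ?_
  simp_rw [← mul_assoc, ← sum_mul, hf, zero_mul]

lemma exists_sum_mul_prod_zpow_eq_zero_of_odd_sub {n : ℕ} (a : Fin (n + 1) → Fin n → ℤ)
    (ha : ∀ γ : Fin (n + 1) → ℝ,
      ∑ j, γ j • (fun i => (a j i : ℝ)) = 0 → ∑ j, γ j = 0 → γ = 0)
    {c : Fin (n + 1) → ℝ} (hc : (∀ j, 0 < c j) ∨ ∀ j, c j < 0)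
    {i₀ : Fin n} {j j' : Fin (n + 1)} (hodd : Odd (a j i₀ - a j' i₀)) :
    ∃ x : Fin n → ℝ, (∀ i, x i ≠ 0) ∧ ∑ k, c k * ∏ i, x i ^ a k i = 0 := by
  set d : Fin (n + 1) → ℝ := fun k => c k * (-1) ^ a k i₀
  have hd : d j * d j' < 0 := by
    have hcc : 0 < c j * c j' := by
      rcases hc with hc | hc
      exacts [mul_pos (hc j) (hc j'), mul_pos_of_neg_of_neg (hc j) (hc j')]
    have hneg_one : ((-1 : ℝ) ^ a j i₀) * (-1) ^ a j' i₀ = -1 := by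
      rw [← zpow_add₀ (by norm_num),
        show a j i₀ + a j' i₀ = (a j i₀ - a j' i₀) + 2 * a j' i₀ by ring]
      exact (hodd.add_even (even_two_mul _)).neg_one_zpow
    calc d j * d j' = -(c j * c j') := by simp only [d]; linear_combination (c j * c j') * hneg_one
      _ < 0 := neg_neg_of_pos hcc
  obtain ⟨y, hy, hdy⟩ := exists_pos_sum_mul_eq_zero_s1 hd
  obtain ⟨s, u, hsu⟩ := exists_add_dotProduct_eq (fun j i => (a j i : ℝ)) ha (Real.log ∘ y)
  refine ⟨fun i => (if i = i₀ then -1 else 1) * Real.exp (u i), fun i => ?_, ?_⟩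
  · exact mul_ne_zero (by split_ifs <;> norm_num) (Real.exp_ne_zero _)
  have hexp : ∀ k, Real.exp (∑ i, (a k i : ℝ) * u i) = Real.exp (-s) * y k := fun k => by
    rw [← Real.exp_log (hy k), ← Real.exp_add]
    congr 1
    simp only [dotProduct, Function.comp_apply] at hsu
    linear_combination hsu k
  calc ∑ k, c k * ∏ i, ((if i = i₀ then -1 else 1) * Real.exp (u i)) ^ a k i
      = Real.exp (-s) * ∑ k, d k * y k := by
        simp_rw [prod_signed_exp_zpow, hexp, mul_sum, d]
        exact sum_congr rfl fun k _ => by ring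
    _ = 0 := by rw [hdy, mul_zero]

theorem feas_nonzero_orthants_simplex_case_general
    (n : ℕ)
    (a : Fin (n + 1) → Fin n → ℤ)
    (ha : ∀ γ : Fin (n + 1) → ℝ,
      ∑ j, γ j • (fun i => (a j i : ℝ)) = 0 → ∑ j, γ j = 0 → γ = 0)
    (c : Fin (n + 1) → ℝ)
    (hsign : (∀ j, 0 < c j) ∨ (∀ j, c j < 0)) :
    ((∃ x : Fin n → ℝ, (∀ i, x i ≠ 0) ∧
        ∑ j, c j * ∏ i, (x i) ^ (a j i) = 0)
      ↔ ∃ (i : Fin n) (j j' : Fin (n + 1)), Odd (a j i - a j' i)) ∧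
    ((∃ (i : Fin n) (j j' : Fin (n + 1)), Odd (a j i - a j' i))
      ↔ ∃ (i : Fin n) (j : Fin (n + 1)), Odd (a j i - a 0 i)) :=
  ⟨⟨fun ⟨_, hx, hf⟩ => exists_odd_sub_of_sum_mul_prod_zpow_eq_zero a hsign hx hf,
      fun ⟨_, _, _, hodd⟩ => exists_sum_mul_prod_zpow_eq_zero_of_odd_sub a ha hsign hodd⟩,
    exists_congr fun i => exists_odd_sub_iff_exists_odd_sub_left (a · i) 0⟩

/-- For an n-variate (n+1)-nomial with integer exponents, affinely
independent support, and coefficients all of the same sign, existence of a root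
in (ℝ∖{0})^n is equivalent to some coordinatewise difference of exponent
vectors being odd, which in turn is equivalent to some coordinate difference
with the first exponent vector being odd. -/
theorem feas_nonzero_orthants_simplex_case
    (n : ℕ) (hn : 1 ≤ n)
    (a : Fin (n + 1) → Fin n → ℤ)
    (ha : ∀ γ : Fin (n + 1) → ℝ,
      ∑ j, γ j • (fun i => (a j i : ℝ)) = 0 → ∑ j, γ j = 0 → γ = 0)
    (c : Fin (n + 1) → ℝ) (hc : ∀ j, c j ≠ 0)
    (hsign : (∀ j, 0 < c j) ∨ (∀ j, c j < 0)) :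
    ((∃ x : Fin n → ℝ, (∀ i, x i ≠ 0) ∧
        ∑ j, c j * ∏ i, (x i) ^ (a j i) = 0)
      ↔ ∃ (i : Fin n) (j j' : Fin (n + 1)), Odd (a j i - a j' i)) ∧
    ((∃ (i : Fin n) (j j' : Fin (n + 1)), Odd (a j i - a j' i))
      ↔ ∃ (i : Fin n) (j : Fin (n + 1)), Odd (a j i - a 0 i)) :=
  feas_nonzero_orthants_simplex_case_general n a ha c hsign
end

section
/- For every n ≥ 2 there exists ε_0 > 0 such that for all ε with 0 < ε < ε_0, the zero set in ℝ^n_+ of the polynomial f_ε(x) := ε(1 + x_1^{2n} + ⋯ + x_n^{2n}) − x_1 x_2 ⋯ x_n has exactly one connected component, and this component is a compact subset of ℝ^n contained in ℝ^n_+. -/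
/-!
In logarithmic coordinates `x = exp y` the equation becomes `H y = 1`, where
`H y = ε (1 + ∑ exp (2n yᵢ)) exp (-∑ yⱼ)` is a sum of exponentials of linear forms, hence
convex. If `ε (n + 1) < 1` then `H 0 < 1`, and `{H ≤ 1}` is bounded because each of its
summands is at most `1` there. So `{H ≤ 1}` is a bounded convex set with `0` in its interior,
and its boundary `{H = 1}` is homeomorphic to the unit sphere of `ℝⁿ`, which is compact and,
for `n ≥ 2`, connected. The coordinatewise exponential carries it onto the zero set.
-/

open Finset Set Real Bornology Metric Filter Topology AffineMap

theorem ConvexOn.sum {𝕜 E β ι : Type*} [Semiring 𝕜] [PartialOrder 𝕜] [AddCommMonoid E]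
    [AddCommMonoid β] [PartialOrder β] [IsOrderedAddMonoid β] [SMul 𝕜 E] [Module 𝕜 β]
    {s : Set E} (hs : Convex 𝕜 s) (t : Finset ι) {f : ι → E → β}
    (hf : ∀ i ∈ t, ConvexOn 𝕜 s (f i)) : ConvexOn 𝕜 s fun x => ∑ i ∈ t, f i x := by
  classical
  induction t using Finset.induction_on with
  | empty => simpa using convexOn_const 0 hs
  | insert a t hat ih =>
    simp only [Finset.sum_insert hat]
    exact (hf a (mem_insert_self a t)).add (ih fun i hi => hf i (mem_insert_of_mem hi))

section ConvexSublevel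

variable {E : Type*} [AddCommGroup E] [Module ℝ E] [TopologicalSpace E] [IsTopologicalAddGroup E]
  [ContinuousSMul ℝ E] {f : E → ℝ} {x₀ : E} {c : ℝ}

/-- A point of the interior with `c ≤ f y` could be pushed a little further along the ray
from `x₀`, where convexity would force `f` above `f y`. -/
theorem ConvexOn.interior_setOf_le_subset (hf : ConvexOn ℝ univ f) (h₀ : f x₀ < c) :
    interior {x | f x ≤ c} ⊆ {x | f x < c} := by
  intro y hy
  show f y < c
  by_contra! hcy
  have hline : Tendsto (fun t : ℝ => lineMap x₀ y t) (𝓝[>] 1) (𝓝 y) := by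
    simpa using (lineMap_continuous.tendsto (1 : ℝ)).mono_left nhdsWithin_le_nhds
  obtain ⟨t, ht_mem, ht⟩ :=
    ((hline.eventually (isOpen_interior.mem_nhds hy)).and self_mem_nhdsWithin).exists
  have hseg : y ∈ openSegment ℝ x₀ (lineMap x₀ y t) := by
    convert lineMap_mem_openSegment ℝ x₀ (lineMap x₀ y t)
      ⟨inv_pos.2 (zero_lt_one.trans ht), inv_lt_one_of_one_lt₀ ht⟩ using 1
    rw [lineMap_lineMap_right, inv_mul_cancel₀ (zero_lt_one.trans ht).ne', lineMap_apply_one]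
  have hle : f (lineMap x₀ y t) ≤ c := interior_subset (s := {x | f x ≤ c}) ht_mem
  exact ((hf.lt_right_of_left_lt trivial trivial hseg (h₀.trans_le hcy)).trans_le hle).not_ge
    hcy

theorem ConvexOn.frontier_setOf_le (hf : ConvexOn ℝ univ f) (hfc : Continuous f)
    (h₀ : f x₀ < c) : frontier {x | f x ≤ c} = {x | f x = c} :=
  (frontier_le_subset_eq hfc continuous_const).antisymm fun _ hy =>
    ⟨subset_closure hy.le, fun hint => (hf.interior_setOf_le_subset h₀ hint).ne hy⟩

end ConvexSublevel

theorem Convex.exists_homeomorph_frontier_eq_image_sphere {E : Type*} [NormedAddCommGroup E]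
    [NormedSpace ℝ E] {s : Set E} (hc : Convex ℝ s) (hne : (interior s).Nonempty)
    (hb : IsBounded s) : ∃ h : E ≃ₜ E, frontier s = h '' sphere 0 1 := by
  obtain ⟨h, -, -, hfr⟩ :=
    exists_homeomorph_image_interior_closure_frontier_eq_unitBall hc hne hb
  exact ⟨h.symm, by rw [← hfr]; exact (h.toEquiv.symm_image_image _).symm⟩

theorem abs_le_of_neg_sum_le_of_forall_le {n : ℕ} {y : Fin n → ℝ} {L : ℝ}
    (h₀ : -∑ j, y j ≤ L) (h : ∀ i, 2 * n * y i - ∑ j, y j ≤ L) (i : Fin n) :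
    |y i| ≤ n * L := by
  set S := ∑ j, y j
  have hn : (1 : ℝ) ≤ n := by exact_mod_cast i.pos
  have hS : S ≤ L := by
    have := Finset.sum_le_sum fun j (_ : j ∈ Finset.univ) => h j
    simp only [Finset.sum_sub_distrib, ← Finset.mul_sum, sum_const, card_univ,
      Fintype.card_fin, nsmul_eq_mul] at this
    nlinarith
  have hle : ∀ j, y j ≤ L := fun j =>
    le_of_mul_le_mul_left (by nlinarith [h j] : (n : ℝ) * y j ≤ n * L) (by positivity)
  have hsingle : L - y i ≤ ∑ j, (L - y j) :=
    single_le_sum (f := fun j => L - y j) (fun j _ => sub_nonneg.2 (hle j)) (mem_univ i)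
  simp only [Finset.sum_sub_distrib, sum_const, card_univ, Fintype.card_fin,
    nsmul_eq_mul] at hsingle
  exact abs_le.2 ⟨by linarith, by nlinarith [hle i]⟩

/-- In the coordinates `x i = exp (y i)` this is `ε (1 + ∑ xᵢ ^ (2n)) / ∏ xᵢ`. -/
noncomputable def logPerturbation (n : ℕ) (ε : ℝ) (y : Fin n → ℝ) : ℝ :=
  ε * exp (-∑ j, y j) + ∑ i, ε * exp (2 * n * y i - ∑ j, y j)

section logPerturbation

variable {n : ℕ} {ε : ℝ}

theorem continuous_logPerturbation : Continuous (logPerturbation n ε) := by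
  unfold logPerturbation; fun_prop

theorem logPerturbation_zero : logPerturbation n ε 0 = ε * (n + 1) := by
  simp [logPerturbation, mul_add, add_comm, mul_comm]

theorem convexOn_logPerturbation (hε : 0 ≤ ε) : ConvexOn ℝ univ (logPerturbation n ε) := by
  have hexp (ℓ : (Fin n → ℝ) →ₗ[ℝ] ℝ) : ConvexOn ℝ univ fun y => ε * exp (ℓ y) :=
    (convexOn_exp.comp_linearMap ℓ).smul hε
  let S : (Fin n → ℝ) →ₗ[ℝ] ℝ := ∑ j, LinearMap.proj j
  have hform : logPerturbation n ε = fun y =>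
      ε * exp ((-S) y) + ∑ i, ε * exp (((2 * n : ℝ) • LinearMap.proj i - S :
        (Fin n → ℝ) →ₗ[ℝ] ℝ) y) := by
    funext y
    simp [logPerturbation, S, LinearMap.sum_apply]
  rw [hform]
  exact (hexp _).add (ConvexOn.sum convex_univ _ fun i _ => hexp _)

theorem logPerturbation_log {x : Fin n → ℝ} (hx : ∀ i, 0 < x i) :
    logPerturbation n ε (fun i => log (x i)) = ε * (1 + ∑ i, x i ^ (2 * n)) / ∏ i, x i := by
  have hprod : exp (∑ j, log (x j)) = ∏ j, x j := by
    rw [exp_sum]; exact prod_congr rfl fun j _ => exp_log (hx j)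
  have hpow (i : Fin n) : exp (2 * n * log (x i)) = x i ^ (2 * n) := by
    rw [← exp_log (pow_pos (hx i) _), log_pow]; push_cast; ring_nf
  simp only [logPerturbation, exp_neg, exp_sub, hprod, hpow]
  simp only [div_eq_mul_inv, ← mul_assoc, ← Finset.sum_mul, ← Finset.mul_sum]
  ring

theorem isBounded_setOf_logPerturbation_le_one (hε : 0 < ε) :
    IsBounded {y | logPerturbation n ε y ≤ 1} := by
  set L := log ε⁻¹
  have hlog (t : ℝ) (ht : ε * exp t ≤ 1) : t ≤ L := by
    rw [le_log_iff_exp_le (inv_pos.2 hε), le_inv_comm₀ (exp_pos t) hε, ← one_div,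
      le_div_iff₀ (exp_pos t)]
    linarith
  refine (isBounded_Icc (fun _ => -(n * L)) (fun _ => n * L)).subset fun y hy => ?_
  have hterm : ∀ i, 0 ≤ ε * exp (2 * n * y i - ∑ j, y j) := fun i => by positivity
  have hfirst : 0 ≤ ε * exp (-∑ j, y j) := by positivity
  have hy : ε * exp (-∑ j, y j) + ∑ i, ε * exp (2 * n * y i - ∑ j, y j) ≤ 1 := hy
  have hbound := abs_le_of_neg_sum_le_of_forall_le
    (hlog _ (by linarith [sum_nonneg (s := Finset.univ) fun i _ => hterm i]))
    fun i => hlog _ (by linarith [single_le_sum (fun j _ => hterm j) (mem_univ i)])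
  exact ⟨fun i => (abs_le.1 (hbound i)).1, fun i => (abs_le.1 (hbound i)).2⟩

theorem exists_homeomorph_setOf_logPerturbation_eq_one (hε : 0 < ε)
    (h0 : logPerturbation n ε 0 < 1) :
    ∃ h : (Fin n → ℝ) ≃ₜ (Fin n → ℝ), {y | logPerturbation n ε y = 1} = h '' sphere 0 1 := by
  have hconv := convexOn_logPerturbation (n := n) hε.le
  rw [← hconv.frontier_setOf_le continuous_logPerturbation h0]
  refine Convex.exists_homeomorph_frontier_eq_image_sphere (by simpa using hconv.convex_le 1)
    ⟨0, ?_⟩ (isBounded_setOf_logPerturbation_le_one hε)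
  exact (isOpen_lt continuous_logPerturbation continuous_const).subset_interior_iff.2
    (fun y (hy : logPerturbation n ε y < 1) => hy.le) h0

theorem setOf_perturbation_eq_zero_eq_image_exp :
    {x : Fin n → ℝ | (∀ i, 0 < x i) ∧ ε * (1 + ∑ i, x i ^ (2 * n)) - ∏ i, x i = 0} =
      (fun y i => exp (y i)) '' {y | logPerturbation n ε y = 1} := by
  ext x
  constructor
  · rintro ⟨hx, hfx⟩
    refine ⟨fun i => log (x i), ?_, funext fun i => exp_log (hx i)⟩
    show logPerturbation n ε (fun i => log (x i)) = 1
    rw [logPerturbation_log hx, sub_eq_zero.1 hfx,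
      div_self (prod_pos fun i _ => hx i).ne']
  · rintro ⟨y, hy, rfl⟩
    have hx : ∀ i, 0 < exp (y i) := fun i => exp_pos _
    have := logPerturbation_log (ε := ε) hx
    simp only [log_exp] at this
    rw [(hy : logPerturbation n ε y = 1), eq_comm,
      div_eq_one_iff_eq (prod_pos fun i _ => hx i).ne'] at this
    exact ⟨hx, sub_eq_zero.2 this⟩

end logPerturbation

/-- For every n ≥ 2 and all sufficiently small ε > 0, the zero set
of ε(1 + x₁^{2n} + ⋯ + xₙ^{2n}) − x₁⋯xₙ in the open positive orthant has
exactly one connected component, and it is compact. -/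
theorem small_perturbation_one_compact_component
    (n : ℕ) (hn : 2 ≤ n) :
    ∃ ε₀ : ℝ, 0 < ε₀ ∧ ∀ ε : ℝ, 0 < ε → ε < ε₀ →
      ∀ Z : Set (Fin n → ℝ),
        Z = {x | (∀ i, 0 < x i) ∧
              ε * (1 + ∑ i, (x i) ^ (2 * n)) - ∏ i, x i = 0} →
        IsConnected Z ∧ IsCompact Z ∧ Z ⊆ {x | ∀ i, 0 < x i} := by
  refine ⟨((n : ℝ) + 1)⁻¹, by positivity, fun ε hε hεlt Z hZ => ?_⟩
  have h0 : logPerturbation n ε 0 < 1 := by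
    rw [logPerturbation_zero, ← lt_inv_mul_iff₀' (by positivity)]
    simpa using hεlt
  have hrank : 1 < Module.rank ℝ (Fin n → ℝ) := by
    simpa using (by exact_mod_cast hn : (1 : Cardinal.{0}) < n)
  obtain ⟨h, hY⟩ := exists_homeomorph_setOf_logPerturbation_eq_one hε h0
  have hmap : Continuous fun y : Fin n → ℝ => fun i => exp (h y i) := by fun_prop
  have hZ' : Z = (fun y i => exp (h y i)) '' sphere 0 1 := by
    rw [hZ, setOf_perturbation_eq_zero_eq_image_exp, hY, image_image]
  refine ⟨?_, ?_, hZ ▸ fun x hx => hx.1⟩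
  · rw [hZ']; exact (isConnected_sphere hrank 0 zero_le_one).image _ hmap.continuousOn
  · rw [hZ']; exact (isCompact_sphere 0 1).image hmap
end

section
/- Let A = {a_1, …, a_{n+2}} ⊂ ℤ^n be a circuit of cardinality n+2, let c_1, …, c_{n+2} be nonzero real numbers, and define f : (ℝ∖{0})^n → ℝ by f(x) = Σ_{j=1}^{n+2} c_j x^{a_j}. Then every open orthant of (ℝ∖{0})^n contains at most one degenerate point of the zero set of f, i.e., at most one point ζ with f(ζ) = 0 and ∂f/∂x_i(ζ) = 0 for all i ∈ {1,…,n}. -/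
/-!
At a degenerate point `ζ` the vector of terms `(c j * ζ ^ a j)_j` is an affine relation of the
exponents: `f ζ = 0` gives `∑ j, c j * ζ ^ a j = 0`, and `ζ i * ∂f/∂x_i (ζ) = 0` gives
`∑ j, c j * ζ ^ a j • a j = 0`. The affine relations of a circuit form a line, so for two degenerate
points `ζ`, `ξ` these vectors are proportional, i.e. `(ξ / ζ) ^ a j = μ` for all `j`. In a common
orthant `ξ / ζ` is positive, so `log (ξ / ζ)` is a linear functional that is constant on the
exponents; as any `n + 1` points of a circuit in `ℝ^n` affinely span it, this functional is zero
and `ξ = ζ`.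
-/

open Finset

/-- A finite family of points of ℝ^n (indexed by Fin N) is a circuit: it is
affinely dependent, but every affine relation supported on a proper subset of
the indices is trivial. -/
def IsCircuitFam {N n : ℕ} (v : Fin N → (Fin n → ℝ)) : Prop :=
  (∃ γ : Fin N → ℝ, γ ≠ 0 ∧ ∑ j, γ j • v j = 0 ∧ ∑ j, γ j = 0) ∧
  (∀ S : Finset (Fin N), S ≠ Finset.univ →
    ∀ γ : Fin N → ℝ, (∀ j ∉ S, γ j = 0) →
      ∑ j, γ j • v j = 0 → ∑ j, γ j = 0 → γ = 0)

/-- The open orthant of (ℝ∖{0})^n with sign pattern s. -/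
def SignOrthant (n : ℕ) (s : Fin n → Bool) : Set (Fin n → ℝ) :=
  {x | ∀ i, if s i then 0 < x i else x i < 0}

namespace IsCircuitFam

variable {N n : ℕ}

theorem eq_zero_of_apply_eq_zero {v : Fin N → Fin n → ℝ} (hv : IsCircuitFam v)
    {γ : Fin N → ℝ} {j₀ : Fin N} (hj₀ : γ j₀ = 0) (hγv : ∑ j, γ j • v j = 0)
    (hγ : ∑ j, γ j = 0) : γ = 0 := by
  refine hv.2 (univ.erase j₀) (fun h => by simpa using congrArg (j₀ ∈ ·) h) γ ?_ hγv hγ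
  intro j hj
  obtain rfl : j = j₀ := by simpa using hj
  exact hj₀

theorem eq_smul_of_relation {v : Fin N → Fin n → ℝ} (hv : IsCircuitFam v) {γ δ : Fin N → ℝ}
    (hγv : ∑ j, γ j • v j = 0) (hγ : ∑ j, γ j = 0)
    (hδv : ∑ j, δ j • v j = 0) (hδ : ∑ j, δ j = 0) {j₀ : Fin N} (hj₀ : γ j₀ ≠ 0) :
    δ = (δ j₀ / γ j₀) • γ := by
  refine sub_eq_zero.mp (hv.eq_zero_of_apply_eq_zero (j₀ := j₀) ?_ ?_ ?_)
  · simp [div_mul_cancel₀ _ hj₀]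
  · simp [sub_smul, sum_sub_distrib, hδv, mul_smul, ← smul_sum, hγv]
  · simp [sum_sub_distrib, hδ, ← mul_sum, hγ]

theorem affineIndependent_succ {v : Fin (N + 1) → Fin n → ℝ} (hv : IsCircuitFam v) :
    AffineIndependent ℝ fun j : Fin N => v j.succ := by
  classical
  rw [affineIndependent_iff]
  intro s w hw hwv e he
  set γ : Fin (N + 1) → ℝ := Fin.cons 0 fun j => if j ∈ s then w j else 0
  have hγ : γ = 0 := hv.eq_zero_of_apply_eq_zero (j₀ := 0) rfl
    (by simpa [γ, Fin.sum_univ_succ, ite_smul, sum_ite_mem] using hwv)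
    (by simpa [γ, Fin.sum_univ_succ, sum_ite_mem] using hw)
  simpa [γ, he] using congrFun hγ e.succ

end IsCircuitFam

theorem LinearMap.eq_zero_of_forall_apply_eq_of_affineSpan_eq_top {k V W ι : Type*} [Ring k]
    [AddCommGroup V] [Module k V] [AddCommGroup W] [Module k W] {p : ι → V}
    (hp : affineSpan k (Set.range p) = ⊤) (φ : V →ₗ[k] W) {w : W} (h : ∀ j, φ (p j) = w) :
    φ = 0 := by
  have hφ : φ.toAffineMap = AffineMap.const k V w :=
    AffineMap.ext_on hp (by rintro _ ⟨j, rfl⟩; exact h j)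
  have hw : w = 0 := by simpa using (congrArg (· 0) hφ).symm
  ext y
  simpa [hw] using congrArg (· y) hφ

theorem eq_one_of_prod_zpow_eq {ι σ : Type*} [Fintype σ] {p : ι → σ → ℤ}
    (hp : affineSpan ℝ (Set.range fun j i => (p j i : ℝ)) = ⊤) {r : σ → ℝ} (hr : ∀ i, 0 < r i)
    {μ : ℝ} (h : ∀ j, ∏ i, r i ^ p j i = μ) : r = 1 := by
  classical
  have hlog := LinearMap.eq_zero_of_forall_apply_eq_of_affineSpan_eq_top hp
    (Fintype.linearCombination ℝ fun i => Real.log (r i)) (w := Real.log μ) fun j => by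
      rw [← h j, Real.log_prod fun i _ => (zpow_pos (hr i) _).ne']
      simp [Fintype.linearCombination_apply, Real.log_zpow]
  funext i
  have := congrArg (· (Pi.single i 1)) hlog
  simp only [Fintype.linearCombination_apply_single, one_smul, LinearMap.zero_apply] at this
  exact Real.eq_one_of_pos_of_log_eq_zero (hr i) this

theorem hasDerivAt_prod_update_zpow {𝕜 σ : Type*} [NontriviallyNormedField 𝕜] [Fintype σ]
    [DecidableEq σ] (x : σ → 𝕜) (e : σ → ℤ) {i : σ} (hx : x i ≠ 0) :
    HasDerivAt (fun t => ∏ k, Function.update x i t k ^ e k) (e i * (∏ k, x k ^ e k) / x i)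
      (x i) := by
  set C := ∏ k ∈ {i}ᶜ, x k ^ e k
  have hprod (t : 𝕜) : ∏ k, Function.update x i t k ^ e k = t ^ e i * C := by
    rw [Fintype.prod_eq_mul_prod_compl i, Function.update_self]
    congr 1
    exact prod_congr rfl fun k hk => by rw [Function.update_of_ne (by simpa using hk)]
  have hx' : ∏ k, x k ^ e k = x i ^ e i * C := by
    simpa using hprod (x i)
  simp only [hprod]
  refine ((hasDerivAt_zpow (e i) (x i) (.inl hx)).mul_const C).congr_deriv ?_
  rw [hx', zpow_sub_one₀ hx]
  field_simp

-- `x i * ∂f/∂x_i (x) = ∑ j, c j * a j i * x ^ a j`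
theorem sum_smul_exponents_eq_zero_of_hasDerivAt {ι σ : Type*} [Fintype ι] [Fintype σ]
    [DecidableEq σ] (c : ι → ℝ) (a : ι → σ → ℤ) {x : σ → ℝ} (hx : ∀ i, x i ≠ 0)
    (h : ∀ i, HasDerivAt (fun t => ∑ j, c j * ∏ k, Function.update x i t k ^ a j k) 0 (x i)) :
    ∑ j, (c j * ∏ k, x k ^ a j k) • (fun i => (a j i : ℝ)) = 0 := by
  funext i
  simp only [Finset.sum_apply, Pi.smul_apply, smul_eq_mul, Pi.zero_apply]
  have := HasDerivAt.fun_sum fun j (_ : j ∈ univ) =>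
    (hasDerivAt_prod_update_zpow x (a j) (hx i)).const_mul (c j)
  have h0 := (h i).unique this
  calc ∑ j, (c j * ∏ k, x k ^ a j k) * a j i
      = (∑ j, c j * (a j i * (∏ k, x k ^ a j k) / x i)) * x i := by
        rw [sum_mul]
        exact sum_congr rfl fun j _ => by field_simp [hx i]
    _ = 0 := by rw [← h0, zero_mul]

theorem SignOrthant.ne_zero {n : ℕ} {s : Fin n → Bool} {x : Fin n → ℝ} (hx : x ∈ SignOrthant n s)
    (i : Fin n) : x i ≠ 0 := by
  have := hx i
  split_ifs at this
  exacts [this.ne', this.ne]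

theorem SignOrthant.div_pos {n : ℕ} {s : Fin n → Bool} {x y : Fin n → ℝ}
    (hx : x ∈ SignOrthant n s) (hy : y ∈ SignOrthant n s) (i : Fin n) : 0 < x i / y i := by
  have hxi := hx i
  have hyi := hy i
  split_ifs at hxi hyi
  exacts [_root_.div_pos hxi hyi, div_pos_of_neg_of_neg hxi hyi]

theorem circuit_one_degenerate_point_per_orthant_general
    (n : ℕ)
    (a : Fin (n + 2) → Fin n → ℤ)
    (hcirc : IsCircuitFam (fun j => fun i => (a j i : ℝ)))
    (c : Fin (n + 2) → ℝ) (hc : ∀ j, c j ≠ 0) :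
    ∀ s : Fin n → Bool,
      {ζ : Fin n → ℝ | ζ ∈ SignOrthant n s ∧
        (∑ j, c j * ∏ i, (ζ i) ^ (a j i) = 0) ∧
        (∀ i : Fin n,
          HasDerivAt
            (fun t : ℝ => ∑ j, c j * ∏ i', (Function.update ζ i t i') ^ (a j i'))
            0 (ζ i))}.Subsingleton := by
  rintro s ζ ⟨hζs, hζ, hζ'⟩ ξ ⟨hξs, hξ, hξ'⟩
  have hζ₀ := SignOrthant.ne_zero hζs
  have hterm (j) : c j * ∏ i, ζ i ^ a j i ≠ 0 :=
    mul_ne_zero (hc j) (prod_ne_zero_iff.2 fun i _ => zpow_ne_zero _ (hζ₀ i))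
  have hprop := hcirc.eq_smul_of_relation
    (sum_smul_exponents_eq_zero_of_hasDerivAt c a hζ₀ hζ') hζ
    (sum_smul_exponents_eq_zero_of_hasDerivAt c a (SignOrthant.ne_zero hξs) hξ') hξ (hterm 0)
  set μ := (c 0 * ∏ i, ξ i ^ a 0 i) / (c 0 * ∏ i, ζ i ^ a 0 i)
  have hratio (j) : ∏ i, (ξ i / ζ i) ^ a j i = μ := by
    simp_rw [div_zpow, prod_div_distrib]
    rw [← mul_div_mul_left _ _ (hc j), congrFun hprop j, Pi.smul_apply, smul_eq_mul,
      mul_div_assoc, div_self (hterm j), mul_one]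
  have hspan := hcirc.affineIndependent_succ.affineSpan_eq_top_iff_card_eq_finrank_add_one.2
    (by simp)
  have hone := eq_one_of_prod_zpow_eq (p := fun j : Fin (n + 1) => a j.succ) hspan
    (SignOrthant.div_pos hξs hζs) fun j => hratio j.succ
  funext i
  exact ((div_eq_one_iff_eq (hζ₀ i)).1 (congrFun hone i)).symm

/-- For an (n+2)-nomial whose support is a circuit, every open
orthant of (ℝ∖{0})^n contains at most one degenerate point of the real zero
set (a point where f and all its partial derivatives vanish). -/
theorem circuit_one_degenerate_point_per_orthant
    (n : ℕ) (hn : 1 ≤ n)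
    (a : Fin (n + 2) → Fin n → ℤ) (hinj : Function.Injective a)
    (hcirc : IsCircuitFam (fun j => fun i => (a j i : ℝ)))
    (c : Fin (n + 2) → ℝ) (hc : ∀ j, c j ≠ 0) :
    ∀ s : Fin n → Bool,
      {ζ : Fin n → ℝ | ζ ∈ SignOrthant n s ∧
        (∑ j, c j * ∏ i, (ζ i) ^ (a j i) = 0) ∧
        (∀ i : Fin n,
          HasDerivAt
            (fun t : ℝ => ∑ j, c j * ∏ i', (Function.update ζ i t i') ^ (a j i'))
            0 (ζ i))}.Subsingleton :=
  circuit_one_degenerate_point_per_orthant_general n a hcirc c hc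
end
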